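/- Let ζ ≤ 0, κ ∈ [0,1] and R > 0. Then there is a constant C, depending only on ζ and κ (and not on ε), such that for all ε = 2^{−N}, all K^ε : ε²ℤ × εℤ → ℝ supported in the ball of radius R around the origin, and all z, z̄ ∈ ε²ℤ × εℤ: |K^ε(z) − K^ε(z̄)| ≤ C ‖z − z̄‖_{s,ε}^{κ} (‖z‖_{s,ε}^{ζ−κ} + ‖z̄‖_{s,ε}^{ζ−κ}) ⦀K^ε⦀_{ζ; 2}^{(ε)}. -/

import Mathlib

/-!
Write `a = ‖z‖_{s,ε}`, `b = ‖z̄‖_{s,ε}` and `d = ‖z - z̄‖_{s,ε}`. If `2d > a` or `2d > b`, the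
triangle inequality gives `a, b ≤ 3d`, and the zeroth-order bound `|K| ≤ M ‖·‖^ζ` at both points
already suffices, since `x^ζ ≤ 3 d^κ x^(ζ-κ)` for `x ≤ 3d`. Otherwise walk from `z` to `z̄` one
grid step at a time, first in space starting from `z`, then in time ending at `z̄`. Every point of
the space (time) leg has norm at least `a/2` (`b/2`), so the first-order difference bounds control
each step, and summing gives `M (d (a/2)^(ζ-1) + d² (b/2)^(ζ-2))`; as `d ≤ a, b` and `κ ≤ 1`, this
is at most `2^(2-ζ) d^κ (a^(ζ-κ) + b^(ζ-κ)) M`.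
-/

open Real

noncomputable section

/-- Forward time difference `D̄_{t,ε²}` on grid functions (indexed form:
`f m j` is the value at the point `(ε² m, ε j)`). -/
def fdT (ε : ℝ) (f : ℤ → ℤ → ℝ) : ℤ → ℤ → ℝ :=
  fun m j => (f (m + 1) j - f m j) / ε ^ 2

/-- Forward space difference `D̄_{x,ε}` on grid functions. -/
def fdX (ε : ℝ) (f : ℤ → ℤ → ℝ) : ℤ → ℤ → ℝ :=
  fun m j => (f m (j + 1) - f m j) / ε

/-- Iterated forward differences `D̄_ε^k = D̄_{t,ε²}^{k₀} D̄_{x,ε}^{k₁}`. -/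
def fdiff (ε : ℝ) (k₀ k₁ : ℕ) (f : ℤ → ℤ → ℝ) : ℤ → ℤ → ℝ :=
  (fdT ε)^[k₀] ((fdX ε)^[k₁] f)

/-- Parabolic norm `‖z‖_s` of the grid point `z = (ε² m, ε j)`. -/
def snorm (ε : ℝ) (m j : ℤ) : ℝ :=
  max (Real.sqrt |ε ^ 2 * (m : ℝ)|) |ε * (j : ℝ)|

/-- `‖z‖_{s,ε} = ‖z‖_s ∨ ε` for the grid point `z = (ε² m, ε j)`. -/
def snormE (ε : ℝ) (m j : ℤ) : ℝ := max (snorm ε m j) ε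

/-- The grid function `K` is supported in the parabolic ball of radius `R`
around the origin. -/
def SuppIn (ε R : ℝ) (K : ℤ → ℤ → ℝ) : Prop :=
  ∀ m j : ℤ, R < snorm ε m j → K m j = 0

/-- `⦀K⦀_{ζ;m}^{(ε)} ≤ M`, expressed through the defining bounds. -/
def SingBound (ε ζ : ℝ) (m : ℕ) (M : ℝ) (K : ℤ → ℤ → ℝ) : Prop :=
  ∀ k₀ k₁ : ℕ, 2 * k₀ + k₁ ≤ m → ∀ mz j : ℤ,
    |fdiff ε k₀ k₁ K mz j| ≤ M * snormE ε mz j ^ (ζ - (2 * (k₀ : ℝ) + (k₁ : ℝ)))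

lemma sqrt_abs_add_le (x y : ℝ) : √|x + y| ≤ √|x| + √|y| := by
  have hx := Real.sq_sqrt (abs_nonneg x)
  have hy := Real.sq_sqrt (abs_nonneg y)
  rw [Real.sqrt_le_iff]
  refine ⟨by positivity, ?_⟩
  nlinarith [abs_add_le x y, mul_nonneg (Real.sqrt_nonneg |x|) (Real.sqrt_nonneg |y|)]

section ParabolicNorm

variable {ε : ℝ}

lemma snorm_add_le (ε : ℝ) (m j m' j' : ℤ) :
    snorm ε (m + m') (j + j') ≤ snorm ε m j + snorm ε m' j' := by
  unfold snorm
  push_cast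
  apply max_le
  · calc √|ε ^ 2 * (m + m')| = √|ε ^ 2 * m + ε ^ 2 * m'| := by rw [mul_add]
      _ ≤ √|ε ^ 2 * m| + √|ε ^ 2 * m'| := sqrt_abs_add_le _ _
      _ ≤ _ := add_le_add (le_max_left _ _) (le_max_left _ _)
  · calc |ε * (j + j')| ≤ |ε * j| + |ε * j'| := by rw [mul_add]; exact abs_add_le _ _
      _ ≤ _ := add_le_add (le_max_right _ _) (le_max_right _ _)

lemma snorm_le_snorm {m j m' j' : ℤ} (hm : |m| ≤ |m'|) (hj : |j| ≤ |j'|) :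
    snorm ε m j ≤ snorm ε m' j' := by
  have hm' : |(m : ℝ)| ≤ |(m' : ℝ)| := by exact_mod_cast hm
  have hj' : |(j : ℝ)| ≤ |(j' : ℝ)| := by exact_mod_cast hj
  unfold snorm
  simp only [abs_mul]
  gcongr

lemma snorm_le_snormE (m j : ℤ) : snorm ε m j ≤ snormE ε m j := le_max_left _ _

lemma snormE_pos (hε : 0 < ε) (m j : ℤ) : 0 < snormE ε m j :=
  hε.trans_le (le_max_right _ _)

lemma snormE_le_snormE {m j m' j' : ℤ} (hm : |m| ≤ |m'|) (hj : |j| ≤ |j'|) :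
    snormE ε m j ≤ snormE ε m' j' :=
  max_le_max (snorm_le_snorm hm hj) le_rfl

lemma snormE_le_snormE_add_snorm (m j m' j' : ℤ) :
    snormE ε m j ≤ snormE ε m' j' + snorm ε (m - m') (j - j') := by
  refine max_le ?_ ((le_max_right _ _).trans (le_add_of_nonneg_right ?_))
  · calc snorm ε m j = snorm ε (m' + (m - m')) (j' + (j - j')) := by
          rw [add_sub_cancel, add_sub_cancel]
      _ ≤ snorm ε m' j' + snorm ε (m - m') (j - j') := snorm_add_le ε _ _ _ _
      _ ≤ _ := by gcongr; exact snorm_le_snormE _ _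
  · exact (Real.sqrt_nonneg _).trans (le_max_left _ _)

lemma snormE_sub_comm (m j m' j' : ℤ) :
    snormE ε (m - m') (j - j') = snormE ε (m' - m) (j' - j) :=
  le_antisymm (snormE_le_snormE (abs_sub_comm m m').le (abs_sub_comm j j').le)
    (snormE_le_snormE (abs_sub_comm m' m).le (abs_sub_comm j' j).le)

lemma snormE_le_snormE_add_snormE_sub (m j m' j' : ℤ) :
    snormE ε m j ≤ snormE ε m' j' + snormE ε (m - m') (j - j') :=
  (snormE_le_snormE_add_snorm m j m' j').trans (by gcongr; exact snorm_le_snormE _ _)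

end ParabolicNorm

lemma abs_sub_le_natAbs_mul_of_abs_succ_sub_le (f : ℤ → ℝ) {S : ℝ} (m q : ℤ)
    (h : ∀ p, |p - m| ≤ |q| → |f (p + 1) - f p| ≤ S) :
    |f (m + q) - f m| ≤ q.natAbs * S := by
  obtain ⟨n, rfl | rfl⟩ := Int.eq_nat_or_neg q
  · have := dist_le_range_sum_of_dist_le (f := fun i : ℕ => f (m + i)) n (d := fun _ => S)
      fun {k} hk => by
        rw [dist_comm, Real.dist_eq, Nat.cast_succ, ← add_assoc]
        exact h _ (by simp only [add_sub_cancel_left, Nat.abs_cast, Nat.cast_le]; omega)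
    simpa [Real.dist_eq, abs_sub_comm] using this
  · have := dist_le_range_sum_of_dist_le (f := fun i : ℕ => f (m - i)) n (d := fun _ => S)
      fun {k} hk => by
        rw [Real.dist_eq, show m - k = m - (k + 1 : ℕ) + 1 by push_cast; ring]
        exact h _ (by rw [abs_neg, abs_of_nonpos (by omega), abs_of_nonneg (by omega)]; omega)
    rw [abs_sub_comm]
    simpa [Real.dist_eq, sub_eq_add_neg] using this

lemma rpow_mul_rpow_sub_le_of_le {x y κ e : ℝ} (ζ : ℝ) (hx : 0 < x) (hxy : x ≤ y)
    (hκe : κ ≤ e) : x ^ e * y ^ (ζ - e) ≤ x ^ κ * y ^ (ζ - κ) := by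
  have hy := hx.trans_le hxy
  have split : ∀ t, x ^ t * y ^ (ζ - t) = (x / y) ^ t * y ^ ζ := fun t => by
    rw [Real.div_rpow hx.le hy.le, Real.rpow_sub hy]
    field_simp
  rw [split, split]
  refine mul_le_mul_of_nonneg_right ?_ (by positivity)
  exact Real.rpow_le_rpow_of_exponent_ge (div_pos hx hy) ((div_le_one hy).2 hxy) hκe

lemma rpow_le_mul_rpow_mul_rpow_sub {x d c κ : ℝ} (ζ : ℝ) (hx : 0 < x) (hd : 0 ≤ d)
    (hc : 1 ≤ c) (hκ0 : 0 ≤ κ) (hκ1 : κ ≤ 1) (hxd : x ≤ c * d) :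
    x ^ ζ ≤ c * d ^ κ * x ^ (ζ - κ) :=
  calc x ^ ζ = x ^ κ * x ^ (ζ - κ) := by rw [← Real.rpow_add hx]; ring_nf
    _ ≤ (c * d) ^ κ * x ^ (ζ - κ) := by gcongr
    _ = c ^ κ * d ^ κ * x ^ (ζ - κ) := by rw [Real.mul_rpow (by linarith) hd]
    _ ≤ c * d ^ κ * x ^ (ζ - κ) := by gcongr; exact Real.rpow_le_self_of_one_le hc hκ1

lemma pow_mul_half_rpow_le {d y κ : ℝ} (ζ : ℝ) {e : ℕ} (hd : 0 < d) (hdy : d ≤ y)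
    (hκe : κ ≤ e) (he : e ≤ 2) :
    d ^ e * (y / 2) ^ (ζ - e) ≤ 2 ^ (2 - ζ) * d ^ κ * y ^ (ζ - κ) := by
  have hy := hd.trans_le hdy
  calc d ^ e * (y / 2) ^ (ζ - e) = 2 ^ ((e : ℝ) - ζ) * (d ^ (e : ℝ) * y ^ (ζ - e)) := by
        rw [Real.div_rpow hy.le zero_le_two, show (e : ℝ) - ζ = -(ζ - e) by ring,
          Real.rpow_neg zero_le_two, Real.rpow_natCast]
        field_simp
    _ ≤ 2 ^ (2 - ζ) * (d ^ κ * y ^ (ζ - κ)) := by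
        refine mul_le_mul ?_ (rpow_mul_rpow_sub_le_of_le ζ hd hdy hκe) (by positivity)
          (by positivity)
        exact Real.rpow_le_rpow_of_exponent_le one_le_two (by gcongr; exact_mod_cast he)
    _ = 2 ^ (2 - ζ) * d ^ κ * y ^ (ζ - κ) := by ring

lemma half_snormE_le_of_snorm_sub_le {ε d : ℝ} {m j m' j' : ℤ}
    (h : snorm ε (m - m') (j - j') ≤ d) (hd : 2 * d ≤ snormE ε m j) :
    snormE ε m j / 2 ≤ snormE ε m' j' := by
  have := snormE_le_snormE_add_snorm (ε := ε) m j m' j'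
  linarith

namespace SingBound

variable {ε ζ M : ℝ} {n : ℕ} {K : ℤ → ℤ → ℝ}

lemma abs_le (hK : SingBound ε ζ n M K) (m j : ℤ) : |K m j| ≤ M * snormE ε m j ^ ζ := by
  simpa [fdiff] using hK 0 0 (Nat.zero_le n) m j

lemma abs_sub_time_step_le (hK : SingBound ε ζ n M K) (hn : 2 ≤ n) (hε : 0 < ε)
    (m j : ℤ) : |K (m + 1) j - K m j| ≤ M * snormE ε m j ^ (ζ - 2) * ε ^ 2 := by
  have h := hK 1 0 (by omega) m j
  simp only [fdiff, Function.iterate_one, Function.iterate_zero, id, fdT, abs_div,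
    abs_of_pos (pow_pos hε 2)] at h
  rw [div_le_iff₀ (by positivity)] at h
  norm_num at h
  exact h

lemma abs_sub_space_step_le (hK : SingBound ε ζ n M K) (hn : 1 ≤ n) (hε : 0 < ε)
    (m j : ℤ) : |K m (j + 1) - K m j| ≤ M * snormE ε m j ^ (ζ - 1) * ε := by
  have h := hK 0 1 (by omega) m j
  simp only [fdiff, Function.iterate_one, Function.iterate_zero, id, fdX, abs_div,
    abs_of_pos hε] at h
  rw [div_le_iff₀ hε] at h
  norm_num at h
  exact h

lemma abs_sub_time_le (hK : SingBound ε ζ n M K) (hn : 2 ≤ n) (hε : 0 < ε) (hζ : ζ ≤ 2)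
    (hM : 0 ≤ M) {m j q : ℤ} {d : ℝ} (hq : snormE ε q 0 ≤ d) (hd : 2 * d ≤ snormE ε m j) :
    |K (m + q) j - K m j| ≤ M * (d ^ 2 * (snormE ε m j / 2) ^ (ζ - 2)) := by
  set y := snormE ε m j
  have hy : 0 < y := snormE_pos hε m j
  have hstep : ∀ p, |p - m| ≤ |q| → |K (p + 1) j - K p j| ≤ M * (y / 2) ^ (ζ - 2) * ε ^ 2 := by
    intro p hp
    have hpm : snorm ε (m - p) (j - j) ≤ d :=
      ((snorm_le_snorm (by rwa [abs_sub_comm]) (by simp)).trans (snorm_le_snormE q 0)).trans hq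
    have hpy := half_snormE_le_of_snorm_sub_le hpm hd
    calc |K (p + 1) j - K p j| ≤ M * snormE ε p j ^ (ζ - 2) * ε ^ 2 :=
          hK.abs_sub_time_step_le hn hε p j
      _ ≤ M * (y / 2) ^ (ζ - 2) * ε ^ 2 := by
          refine mul_le_mul_of_nonneg_right (mul_le_mul_of_nonneg_left ?_ hM) (by positivity)
          exact Real.rpow_le_rpow_of_nonpos (by positivity) hpy (by linarith)
  have hcount : q.natAbs * ε ^ 2 ≤ d ^ 2 := by
    have hsq : q.natAbs * ε ^ 2 = √|ε ^ 2 * (q : ℝ)| ^ 2 := by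
      rw [Real.sq_sqrt (abs_nonneg _), abs_mul, abs_of_pos (by positivity), Nat.cast_natAbs,
        Int.cast_abs, mul_comm]
    rw [hsq]
    gcongr
    exact (le_max_left _ _).trans ((snorm_le_snormE q 0).trans hq)
  calc |K (m + q) j - K m j| ≤ q.natAbs * (M * (y / 2) ^ (ζ - 2) * ε ^ 2) :=
        abs_sub_le_natAbs_mul_of_abs_succ_sub_le (K · j) m q hstep
    _ = M * (y / 2) ^ (ζ - 2) * (q.natAbs * ε ^ 2) := by ring
    _ ≤ M * (y / 2) ^ (ζ - 2) * d ^ 2 := by gcongr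
    _ = M * (d ^ 2 * (y / 2) ^ (ζ - 2)) := by ring

lemma abs_sub_space_le (hK : SingBound ε ζ n M K) (hn : 1 ≤ n) (hε : 0 < ε) (hζ : ζ ≤ 1)
    (hM : 0 ≤ M) {m j q : ℤ} {d : ℝ} (hq : snormE ε 0 q ≤ d) (hd : 2 * d ≤ snormE ε m j) :
    |K m (j + q) - K m j| ≤ M * (d * (snormE ε m j / 2) ^ (ζ - 1)) := by
  set y := snormE ε m j
  have hy : 0 < y := snormE_pos hε m j
  have hstep : ∀ p, |p - j| ≤ |q| → |K m (p + 1) - K m p| ≤ M * (y / 2) ^ (ζ - 1) * ε := by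
    intro p hp
    have hpj : snorm ε (m - m) (j - p) ≤ d :=
      ((snorm_le_snorm (by simp) (by rwa [abs_sub_comm])).trans (snorm_le_snormE 0 q)).trans hq
    have hpy := half_snormE_le_of_snorm_sub_le hpj hd
    calc |K m (p + 1) - K m p| ≤ M * snormE ε m p ^ (ζ - 1) * ε :=
          hK.abs_sub_space_step_le hn hε m p
      _ ≤ M * (y / 2) ^ (ζ - 1) * ε := by
          refine mul_le_mul_of_nonneg_right (mul_le_mul_of_nonneg_left ?_ hM) (by positivity)
          exact Real.rpow_le_rpow_of_nonpos (by positivity) hpy (by linarith)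
  have hcount : q.natAbs * ε ≤ d := by
    have h : q.natAbs * ε = |ε * (q : ℝ)| := by
      rw [abs_mul, abs_of_pos hε, Nat.cast_natAbs, Int.cast_abs, mul_comm]
    rw [h]
    exact (le_max_right _ _).trans ((snorm_le_snormE 0 q).trans hq)
  calc |K m (j + q) - K m j| ≤ q.natAbs * (M * (y / 2) ^ (ζ - 1) * ε) :=
        abs_sub_le_natAbs_mul_of_abs_succ_sub_le (K m ·) j q hstep
    _ = M * (y / 2) ^ (ζ - 1) * (q.natAbs * ε) := by ring
    _ ≤ M * (y / 2) ^ (ζ - 1) * d := by gcongr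
    _ = M * (d * (y / 2) ^ (ζ - 1)) := by ring

lemma abs_sub_le_of_far (hK : SingBound ε ζ n M K) (hε : 0 < ε) (hM : 0 ≤ M) {κ : ℝ}
    (hκ0 : 0 ≤ κ) (hκ1 : κ ≤ 1) {m₁ j₁ m₂ j₂ : ℤ}
    (hfar : snormE ε m₁ j₁ < 2 * snormE ε (m₁ - m₂) (j₁ - j₂) ∨
      snormE ε m₂ j₂ < 2 * snormE ε (m₁ - m₂) (j₁ - j₂)) :
    |K m₁ j₁ - K m₂ j₂| ≤ 3 * snormE ε (m₁ - m₂) (j₁ - j₂) ^ κ *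
      (snormE ε m₁ j₁ ^ (ζ - κ) + snormE ε m₂ j₂ ^ (ζ - κ)) * M := by
  have hab := snormE_le_snormE_add_snormE_sub (ε := ε) m₁ j₁ m₂ j₂
  have hba := snormE_le_snormE_add_snormE_sub (ε := ε) m₂ j₂ m₁ j₁
  rw [snormE_sub_comm m₂] at hba
  set a := snormE ε m₁ j₁
  set b := snormE ε m₂ j₂
  set d := snormE ε (m₁ - m₂) (j₁ - j₂)
  have hd : 0 ≤ d := (snormE_pos hε _ _).le
  have ha3 : a ≤ 3 * d := by rcases hfar with h | h <;> linarith
  have hb3 : b ≤ 3 * d := by rcases hfar with h | h <;> linarith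
  calc |K m₁ j₁ - K m₂ j₂| ≤ |K m₁ j₁| + |K m₂ j₂| := abs_sub _ _
    _ ≤ M * a ^ ζ + M * b ^ ζ := add_le_add (hK.abs_le _ _) (hK.abs_le _ _)
    _ ≤ M * (3 * d ^ κ * a ^ (ζ - κ)) + M * (3 * d ^ κ * b ^ (ζ - κ)) := by
        gcongr
        · exact rpow_le_mul_rpow_mul_rpow_sub ζ (snormE_pos hε _ _) hd (by norm_num) hκ0 hκ1 ha3
        · exact rpow_le_mul_rpow_mul_rpow_sub ζ (snormE_pos hε _ _) hd (by norm_num) hκ0 hκ1 hb3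
    _ = 3 * d ^ κ * (a ^ (ζ - κ) + b ^ (ζ - κ)) * M := by ring

lemma abs_sub_le_of_near (hK : SingBound ε ζ n M K) (hn : 2 ≤ n) (hε : 0 < ε) (hζ : ζ ≤ 1)
    (hM : 0 ≤ M) {κ : ℝ} (hκ1 : κ ≤ 1) {m₁ j₁ m₂ j₂ : ℤ}
    (ha : 2 * snormE ε (m₁ - m₂) (j₁ - j₂) ≤ snormE ε m₁ j₁)
    (hb : 2 * snormE ε (m₁ - m₂) (j₁ - j₂) ≤ snormE ε m₂ j₂) :
    |K m₁ j₁ - K m₂ j₂| ≤ 2 ^ (2 - ζ) * snormE ε (m₁ - m₂) (j₁ - j₂) ^ κ *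
      (snormE ε m₁ j₁ ^ (ζ - κ) + snormE ε m₂ j₂ ^ (ζ - κ)) * M := by
  have hspace := hK.abs_sub_space_le (by omega) hε hζ hM (q := j₂ - j₁)
    (snormE_le_snormE (by simp) (abs_sub_comm _ _).le) ha
  have htime := hK.abs_sub_time_le hn hε (by linarith) hM (q := m₁ - m₂)
    (snormE_le_snormE le_rfl (by simp)) hb
  rw [add_sub_cancel, abs_sub_comm] at hspace
  rw [add_sub_cancel] at htime
  set a := snormE ε m₁ j₁
  set b := snormE ε m₂ j₂
  set d := snormE ε (m₁ - m₂) (j₁ - j₂)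
  have hd : 0 < d := snormE_pos hε _ _
  have h1 := pow_mul_half_rpow_le ζ (e := 1) (y := a) (κ := κ) hd (by linarith)
    (by simpa using hκ1) (by norm_num)
  have h2 := pow_mul_half_rpow_le ζ (e := 2) (y := b) (κ := κ) hd (by linarith)
    (by push_cast; linarith) le_rfl
  simp only [pow_one, Nat.cast_one, Nat.cast_ofNat] at h1 h2
  calc |K m₁ j₁ - K m₂ j₂| ≤ |K m₁ j₁ - K m₁ j₂| + |K m₁ j₂ - K m₂ j₂| := abs_sub_le _ _ _
    _ ≤ M * (d * (a / 2) ^ (ζ - 1)) + M * (d ^ 2 * (b / 2) ^ (ζ - 2)) :=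
        add_le_add hspace htime
    _ ≤ M * (2 ^ (2 - ζ) * d ^ κ * a ^ (ζ - κ)) + M * (2 ^ (2 - ζ) * d ^ κ * b ^ (ζ - κ)) := by
        gcongr
    _ = 2 ^ (2 - ζ) * d ^ κ * (a ^ (ζ - κ) + b ^ (ζ - κ)) * M := by ring

end SingBound

theorem statement15_general (ζ κ : ℝ) (hζ : ζ ≤ 0) (hκ : κ ∈ Set.Icc (0 : ℝ) 1)
    (R : ℝ) :
    ∃ C : ℝ, 0 < C ∧
      ∀ (N : ℕ) (ε : ℝ), ε = ((2 : ℝ) ^ N)⁻¹ →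
      ∀ K : ℤ → ℤ → ℝ, SuppIn ε R K →
      ∀ M : ℝ, 0 ≤ M → SingBound ε ζ 2 M K →
      ∀ m₁ j₁ m₂ j₂ : ℤ,
        |K m₁ j₁ - K m₂ j₂| ≤
          C * snormE ε (m₁ - m₂) (j₁ - j₂) ^ κ *
            (snormE ε m₁ j₁ ^ (ζ - κ) + snormE ε m₂ j₂ ^ (ζ - κ)) * M := by
  obtain ⟨hκ0, hκ1⟩ := hκ
  refine ⟨3 + 2 ^ (2 - ζ), by positivity, fun N ε hε K _ M hM hK m₁ j₁ m₂ j₂ => ?_⟩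
  have hε0 : 0 < ε := hε ▸ by positivity
  have ha := snormE_pos hε0 m₁ j₁
  have hb := snormE_pos hε0 m₂ j₂
  have hd := snormE_pos hε0 (m₁ - m₂) (j₁ - j₂)
  rw [add_mul, add_mul, add_mul]
  by_cases hnear : 2 * snormE ε (m₁ - m₂) (j₁ - j₂) ≤ snormE ε m₁ j₁ ∧
      2 * snormE ε (m₁ - m₂) (j₁ - j₂) ≤ snormE ε m₂ j₂
  · exact (hK.abs_sub_le_of_near le_rfl hε0 (by linarith) hM hκ1 hnear.1 hnear.2).trans
      (le_add_of_nonneg_left (by positivity))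
  · rw [not_and_or, not_le, not_le] at hnear
    exact (hK.abs_sub_le_of_far hε0 hM hκ0 hκ1 hnear).trans
      (le_add_of_nonneg_right (by positivity))

/-- increments of a discrete singular kernel of order `ζ ≤ 0`. -/
theorem statement15 (ζ κ : ℝ) (hζ : ζ ≤ 0) (hκ : κ ∈ Set.Icc (0 : ℝ) 1)
    (R : ℝ) (hR : 0 < R) :
    ∃ C : ℝ, 0 < C ∧
      ∀ (N : ℕ) (ε : ℝ), ε = ((2 : ℝ) ^ N)⁻¹ →
      ∀ K : ℤ → ℤ → ℝ, SuppIn ε R K →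
      ∀ M : ℝ, 0 ≤ M → SingBound ε ζ 2 M K →
      ∀ m₁ j₁ m₂ j₂ : ℤ,
        |K m₁ j₁ - K m₂ j₂| ≤
          C * snormE ε (m₁ - m₂) (j₁ - j₂) ^ κ *
            (snormE ε m₁ j₁ ^ (ζ - κ) + snormE ε m₂ j₂ ^ (ζ - κ)) * M :=
  statement15_general ζ κ hζ hκ R
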